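/- arXiv:1611.08498 — 2 statements merged into one kernel-verified Lean document; each statement's English description precedes it below -/
import Mathlib

section
/- Let p ≥ q ≥ r be positive integers with gcd(p,q,r)=1, t = gcd(p,q) > 1, q not dividing p, r₁ = p/t, r₂ = q/t. If r > (r₁r₂ − r₁ − r₂ + 4)·r₂·(r₁ + 1 + (r₂−1)/(r₁² + (r₁−1)(r₂−1))), then the maximum size of a subset of {1,...,n} with no solution (x,y,z) to px+qy=rz equals ⌈(t−1)n/t⌉. -/
/-!
The non-multiples of `t` contain no solution, since `t ∣ px + qy` while `t ∤ rz`. Conversely,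
let `A ⊆ [n]` miss fewer than `⌊n/t⌋` elements and let `tm` be the largest multiple of `t` in `A`.
The multiples of `t` above `tm` are all missing, so fewer than `m` elements of `[1, tm)` are
missing. Since `r ≥ 2r₁r₂ + r₂`, the equation `r₁x + r₂y = rm` has at least `2m - 1` positive
solutions, all with `x, y < tm`, and each gives `p x + q y = r (tm)`; so each needs `x` or `y`
missing from `A`, which forces at least `m` missing elements below `tm`, a contradiction.
-/

open Finset

def IsSolutionFree (p q r : ℕ) (A : Finset ℕ) : Prop :=
  ∀ x ∈ A, ∀ y ∈ A, ∀ z ∈ A, p * x + q * y ≠ r * z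

theorem pred_mul_add_pred_div_eq_sub_div {t : ℕ} (n : ℕ) (ht : 0 < t) :
    ((t - 1) * n + t - 1) / t = n - n / t := by
  obtain ⟨s, rfl⟩ : ∃ s, t = s + 1 := ⟨t - 1, by omega⟩
  have hn := Nat.div_add_mod n (s + 1)
  have hρ := Nat.mod_lt n ht
  generalize n / (s + 1) = K, n % (s + 1) = ρ at hn hρ
  subst hn
  have hsub : (s + 1) * K + ρ - K = s * K + ρ := by rw [add_mul, one_mul]; omega
  rw [Nat.add_sub_cancel, hsub, Nat.add_succ_sub_one]
  apply Nat.div_eq_of_lt_le <;> nlinarith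

theorem card_filter_not_dvd_Icc (n t : ℕ) : #{x ∈ Icc 1 n | ¬ t ∣ x} = n - n / t := by
  have h := card_filter_add_card_filter_not (s := Ioc 0 n) (t ∣ ·)
  rw [Nat.Ioc_filter_dvd_card_eq_div, Nat.card_Ioc] at h
  rw [← zero_add 1, Icc_add_one_left_eq_Ioc]
  omega

theorem isSolutionFree_filter_not_dvd {p q r t : ℕ} (hp : t ∣ p) (hq : t ∣ q) (htr : t.Coprime r)
    (s : Finset ℕ) : IsSolutionFree p q r {x ∈ s | ¬ t ∣ x} := by
  intro x _ y _ z hz hxyz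
  refine (mem_filter.1 hz).2 (htr.dvd_of_dvd_mul_left ?_)
  rw [← hxyz]
  exact dvd_add (hp.mul_right x) (hq.mul_right y)

theorem exists_mul_modEq_of_coprime {a b : ℕ} (hab : a.Coprime b) (hb : 0 < b) (N : ℕ) :
    ∃ x, 0 < x ∧ x ≤ b ∧ a * x ≡ N [MOD b] := by
  have : NeZero b := ⟨hb.ne'⟩
  set c : ZMod b := N * (a : ZMod b)⁻¹ - 1
  refine ⟨c.val + 1, Nat.succ_pos _, c.val_lt, ?_⟩
  rw [← ZMod.natCast_eq_natCast_iff]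
  push_cast
  rw [ZMod.natCast_zmod_val, sub_add_cancel, mul_left_comm, ZMod.coe_mul_inv_eq_one a hab, mul_one]

theorem exists_card_eq_pos_solutions {a b : ℕ} (hab : a.Coprime b) (hb : 0 < b) {k N : ℕ}
    (hN : (k + 1) * (a * b) + b ≤ N) :
    ∃ S : Finset (ℕ × ℕ), #S = k + 1 ∧ ∀ s ∈ S, 0 < s.1 ∧ 0 < s.2 ∧ a * s.1 + b * s.2 = N := by
  obtain ⟨x₀, hx₀, hx₀b, hmod⟩ := exists_mul_modEq_of_coprime hab hb N
  have hax₀ : a * x₀ ≤ N := by nlinarith [Nat.mul_le_mul_left a hx₀b, Nat.zero_le (k * (a * b))]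
  obtain ⟨y₀, hy₀⟩ := (Nat.modEq_iff_dvd' hax₀).1 hmod
  replace hy₀ : a * x₀ + b * y₀ = N := by omega
  refine ⟨(range (k + 1)).image fun i => (x₀ + i * b, y₀ - i * a), ?_, ?_⟩
  · rw [card_image_of_injective _ fun i j h => ?_, card_range]
    have h := congrArg Prod.fst h
    simp only [add_right_inj] at h
    exact Nat.eq_of_mul_eq_mul_right hb h
  · simp only [mem_image, mem_range]
    rintro _ ⟨i, hi, rfl⟩
    have hia : i * a < y₀ := by
      refine Nat.lt_of_mul_lt_mul_left (a := b) ?_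
      nlinarith [Nat.mul_le_mul_right (a * b) (Nat.le_of_lt_succ hi), Nat.mul_le_mul_left a hx₀b]
    refine ⟨by omega, by omega, ?_⟩
    zify [hia.le] at hy₀ ⊢
    linear_combination hy₀

theorem card_le_two_mul_card_of_mem_or_mem {a b N : ℕ} (ha : 0 < a) (hb : 0 < b)
    {S : Finset (ℕ × ℕ)} {B : Finset ℕ} (hS : ∀ s ∈ S, a * s.1 + b * s.2 = N)
    (hB : ∀ s ∈ S, s.1 ∈ B ∨ s.2 ∈ B) : #S ≤ 2 * #B := by
  have hfst : #{s ∈ S | s.1 ∈ B} ≤ #B := by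
    refine card_le_card_of_injOn Prod.fst (fun s hs => (mem_filter.1 hs).2) ?_
    intro s hs s' hs' h
    have := hS s (mem_filter.1 hs).1
    have := hS s' (mem_filter.1 hs').1
    exact Prod.ext h (Nat.eq_of_mul_eq_mul_left hb (by rw [h] at *; omega))
  have hsnd : #{s ∈ S | s.2 ∈ B} ≤ #B := by
    refine card_le_card_of_injOn Prod.snd (fun s hs => (mem_filter.1 hs).2) ?_
    intro s hs s' hs' h
    have := hS s (mem_filter.1 hs).1
    have := hS s' (mem_filter.1 hs').1
    exact Prod.ext (Nat.eq_of_mul_eq_mul_left ha (by rw [h] at *; omega)) h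
  calc #S = #{s ∈ S | s.1 ∈ B ∨ s.2 ∈ B} := by rw [filter_true_of_mem hB]
    _ ≤ #{s ∈ S | s.1 ∈ B} + #{s ∈ S | s.2 ∈ B} := by rw [filter_or]; exact card_union_le _ _
    _ ≤ 2 * #B := by omega

theorem exists_mul_mem_card_Ico_sdiff_lt {t n : ℕ} (ht : 0 < t) {A : Finset ℕ}
    (hA : A ⊆ Icc 1 n) (hcard : n - n / t < #A) :
    ∃ m, 0 < m ∧ t * m ∈ A ∧ #(Ico 1 (t * m) \ A) < m := by
  set m := Nat.findGreatest (t * · ∈ A) (n / t) with hm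
  have hmK : m ≤ n / t := Nat.findGreatest_le _
  have htm : t * m ≤ n := (Nat.mul_le_mul_left t hmK).trans (Nat.mul_div_le n t)
  have hsub : (Ico 1 (t * m) \ A) ∪ (Ioc m (n / t)).image (t * ·) ⊆ Icc 1 n \ A := by
    intro x hx
    simp only [mem_union, mem_sdiff, mem_Ico, mem_image, mem_Ioc, mem_Icc] at hx ⊢
    rcases hx with ⟨⟨h1, h2⟩, hxA⟩ | ⟨j, ⟨hmj, hjK⟩, rfl⟩
    · exact ⟨⟨h1, by omega⟩, hxA⟩
    · have := (Nat.mul_le_mul_left t hjK).trans (Nat.mul_div_le n t)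
      exact ⟨⟨Nat.mul_pos ht (by omega), this⟩,
        Nat.findGreatest_is_greatest (P := (t * · ∈ A)) hmj hjK⟩
  have hdisj : Disjoint (Ico 1 (t * m) \ A) ((Ioc m (n / t)).image (t * ·)) := by
    simp only [disjoint_left, mem_sdiff, mem_Ico, mem_image, mem_Ioc]
    rintro _ ⟨⟨_, hx⟩, _⟩ ⟨j, ⟨hmj, _⟩, rfl⟩
    exact absurd hx (not_lt.2 (Nat.mul_le_mul_left t hmj.le))
  have hcount := card_le_card hsub
  have hAn := card_le_card hA
  rw [card_union_of_disjoint hdisj, card_image_of_injective _ (mul_right_injective₀ ht.ne'),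
    Nat.card_Ioc, card_sdiff_of_subset hA, Nat.card_Icc] at hcount
  rw [Nat.card_Icc] at hAn
  have hm0 : 0 < m := by omega
  exact ⟨m, hm0, Nat.findGreatest_of_ne_zero (P := (t * · ∈ A)) hm.symm hm0.ne', by omega⟩

theorem card_le_of_isSolutionFree {a b r t n : ℕ} {A : Finset ℕ} (hab : a.Coprime b)
    (hb : 0 < b) (hba : b ≤ a) (hrt : r ≤ t * b) (hr : 2 * a * b + b ≤ r) (hA : A ⊆ Icc 1 n)
    (hfree : IsSolutionFree (t * a) (t * b) r A) : #A ≤ n - n / t := by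
  have ha : 0 < a := hb.trans_le hba
  have ht : 0 < t := Nat.pos_of_mul_pos_right
    (hb.trans_le ((Nat.le_add_left _ _).trans (hr.trans hrt)))
  by_contra! hcard
  obtain ⟨m, hm, htm, hmissing⟩ := exists_mul_mem_card_Ico_sdiff_lt ht hA hcard
  obtain ⟨k, rfl⟩ : ∃ k, m = k + 1 := ⟨m - 1, by omega⟩
  obtain ⟨S, hS, hsol⟩ := exists_card_eq_pos_solutions hab hb (k := 2 * k) (N := r * (k + 1))
    (by nlinarith)
  have hrange : ∀ s ∈ S, s.1 ∈ Ico 1 (t * (k + 1)) ∧ s.2 ∈ Ico 1 (t * (k + 1)) := by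
    intro s hs
    obtain ⟨hx, hy, hxy⟩ := hsol s hs
    have hrm : r * (k + 1) ≤ t * b * (k + 1) := Nat.mul_le_mul_right _ hrt
    refine ⟨mem_Ico.2 ⟨hx, Nat.lt_of_mul_lt_mul_left (a := a) ?_⟩,
      mem_Ico.2 ⟨hy, Nat.lt_of_mul_lt_mul_left (a := b) ?_⟩⟩
    · nlinarith [Nat.mul_le_mul_right (t * (k + 1)) hba, Nat.mul_pos hb hy]
    · nlinarith [Nat.mul_pos ha hx]
  have hmissed : ∀ s ∈ S, s.1 ∈ Ico 1 (t * (k + 1)) \ A ∨ s.2 ∈ Ico 1 (t * (k + 1)) \ A := by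
    intro s hs
    simp only [mem_sdiff, hrange s hs, true_and, ← not_and_or]
    rintro ⟨hxA, hyA⟩
    refine hfree _ hxA _ hyA _ htm ?_
    rw [mul_assoc, mul_assoc, ← mul_add, (hsol s hs).2.2]
    ring
  have := card_le_two_mul_card_of_mem_or_mem ha hb (fun s hs => (hsol s hs).2.2) hmissed
  omega

theorem two_mul_mul_add_lt_of_bound {a b r : ℕ} (ha : 1 ≤ a) (hb : 1 ≤ b)
    (h : ((a : ℚ) * b - a - b + 4) * b *
        ((a : ℚ) + 1 + ((b : ℚ) - 1) / ((a : ℚ) ^ 2 + ((a : ℚ) - 1) * ((b : ℚ) - 1)))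
      < (r : ℚ)) : 2 * a * b + b < r := by
  have ha' : (1 : ℚ) ≤ a := by exact_mod_cast ha
  have hb' : (1 : ℚ) ≤ b := by exact_mod_cast hb
  have hprod : 0 ≤ ((a : ℚ) - 1) * (b - 1) := mul_nonneg (by linarith) (by linarith)
  have hfrac : (0 : ℚ) ≤ (b - 1) / (a ^ 2 + (a - 1) * (b - 1)) :=
    div_nonneg (by linarith) (by positivity)
  -- `ab - a - b + 4 = (a - 1)(b - 1) + 3 ≥ 3`
  have hcoef : (3 : ℚ) * b ≤ (a * b - a - b + 4) * b := by nlinarith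
  have : (2 * a * b + b : ℚ) < r := by nlinarith
  exact_mod_cast this

theorem stmt6_general (p q r t r₁ r₂ : ℕ) (hrq : r ≤ q) (hqp : q ≤ p) (hr : 0 < r)
    (hgcd : Nat.gcd (Nat.gcd p q) r = 1) (ht : t = Nat.gcd p q)
    (hr1 : r₁ = p / t) (hr2 : r₂ = q / t)
    (hrbig : ((r₁ : ℚ) * r₂ - r₁ - r₂ + 4) * r₂ *
        ((r₁ : ℚ) + 1 + ((r₂ : ℚ) - 1) / ((r₁ : ℚ) ^ 2 + ((r₁ : ℚ) - 1) * ((r₂ : ℚ) - 1)))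
      < (r : ℚ))
    (n : ℕ) :
    IsGreatest {m : ℕ | ∃ A : Finset ℕ, A ⊆ Finset.Icc 1 n ∧
      (∀ x ∈ A, ∀ y ∈ A, ∀ z ∈ A, p * x + q * y ≠ r * z) ∧ A.card = m}
      (((t - 1) * n + t - 1) / t) := by
  have hq : 0 < q := hr.trans_le hrq
  have ht0 : 0 < t := ht ▸ Nat.gcd_pos_of_pos_right p hq
  have htp : t ∣ p := ht ▸ Nat.gcd_dvd_left p q
  have htq : t ∣ q := ht ▸ Nat.gcd_dvd_right p q
  have hcop : r₁.Coprime r₂ := by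
    subst ht hr1 hr2
    exact Nat.coprime_div_gcd_div_gcd ht0
  have hp' : p = t * r₁ := by rw [hr1, Nat.mul_div_cancel' htp]
  have hq' : q = t * r₂ := by rw [hr2, Nat.mul_div_cancel' htq]
  have hr₂ : 0 < r₂ := Nat.pos_of_mul_pos_left (hq' ▸ hq)
  have hr₂₁ : r₂ ≤ r₁ := Nat.le_of_mul_le_mul_left (hp' ▸ hq' ▸ hqp) ht0
  have hbig := two_mul_mul_add_lt_of_bound (hr₂.trans_le hr₂₁) hr₂ hrbig
  rw [pred_mul_add_pred_div_eq_sub_div n ht0]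
  refine ⟨⟨_, filter_subset _ _,
    isSolutionFree_filter_not_dvd htp htq (ht ▸ hgcd) _, card_filter_not_dvd_Icc n t⟩, ?_⟩
  rintro _ ⟨A, hA, hfree, rfl⟩
  subst hp' hq'
  exact card_le_of_isSolutionFree hcop hr₂ hr₂₁ hrq hbig.le hA hfree

/-- If `q ∤ p`, `t = gcd(p,q) > 1` and `r` is sufficiently large in terms of
`r₁ = p/t` and `r₂ = q/t`, then the maximum size of a subset of `[n]` with no
solution to `px + qy = rz` equals `⌈(t-1)n/t⌉`. -/
theorem stmt6 (p q r t r₁ r₂ : ℕ) (hrq : r ≤ q) (hqp : q ≤ p) (hr : 0 < r)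
    (hgcd : Nat.gcd (Nat.gcd p q) r = 1) (ht : t = Nat.gcd p q)
    (hr1 : r₁ = p / t) (hr2 : r₂ = q / t) (hndvd : ¬ q ∣ p) (ht1 : 1 < t)
    (hrbig : ((r₁ : ℚ) * r₂ - r₁ - r₂ + 4) * r₂ *
        ((r₁ : ℚ) + 1 + ((r₂ : ℚ) - 1) / ((r₁ : ℚ) ^ 2 + ((r₁ : ℚ) - 1) * ((r₂ : ℚ) - 1)))
      < (r : ℚ))
    (n : ℕ) (hn : 1 ≤ n) :
    IsGreatest {m : ℕ | ∃ A : Finset ℕ, A ⊆ Finset.Icc 1 n ∧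
      (∀ x ∈ A, ∀ y ∈ A, ∀ z ∈ A, p * x + q * y ≠ r * z) ∧ A.card = m}
      (((t - 1) * n + t - 1) / t) :=
  stmt6_general p q r t r₁ r₂ hrq hqp hr hgcd ht hr1 hr2 hrbig n
end

section
/- Let q ≥ 2 and consider the equation L: qx + qy = z. Then for every n, the number of maximal L-free subsets of {1,...,n} is at least 2^((n−6q)/(2q)). -/
/-!
Write `a = ⌊n/(2q)⌋` and `m = ⌊n/q⌋`, and let `X = (a, m) \ {2q}`, a set of at least
`n/(2q) - 3` integers.
For every `T ⊆ X` the set `{1} ∪ T ∪ {q x + q : x ∈ X \ T}` is L-free: two elements other than `1`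
already give `q u + q v > n`, and `q·1 + q v` is only in the set when `v ∈ X \ T`, which the set
avoids. Any maximal L-free extension `M` of it satisfies `M ∩ X = T`, because `x ∈ X \ T` cannot
join `1` and `q x + q`. Hence there are at least `2^|X|` maximal L-free sets.
-/

open Finset

theorem exists_le_maximal_subset {α : Type*} {P : Finset α → Prop} {S A : Finset α}
    (hAS : A ⊆ S) (hA : P A) : ∃ M, A ⊆ M ∧ Maximal (fun B => B ⊆ S ∧ P B) M := by
  have hfin : {B | B ⊆ S ∧ P B}.Finite :=
    S.powerset.finite_toSet.subset fun B hB => mem_powerset.2 hB.1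
  exact hfin.exists_le_maximal ⟨hAS, hA⟩

theorem two_pow_card_le_natCard_of_forall_inter_eq {α : Type*} [DecidableEq α]
    {P : Finset α → Prop} [Finite {A // P A}] (X : Finset α)
    (h : ∀ T ⊆ X, ∃ A, P A ∧ A ∩ X = T) : 2 ^ #X ≤ Nat.card {A // P A} := by
  let restrict : {A // P A} → X.powerset := fun A => ⟨A.1 ∩ X, mem_powerset.2 inter_subset_right⟩
  have hrestrict : Function.Surjective restrict := by
    rintro ⟨T, hT⟩
    obtain ⟨A, hA, hAX⟩ := h T (mem_powerset.1 hT)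
    exact ⟨⟨A, hA⟩, Subtype.ext hAX⟩
  calc 2 ^ #X = Nat.card X.powerset := by rw [Nat.card_eq_finsetCard, card_powerset]
    _ ≤ Nat.card {A // P A} := Nat.card_le_card_of_surjective restrict hrestrict

def LFree (q : ℕ) (A : Finset ℕ) : Prop :=
  ∀ x ∈ A, ∀ y ∈ A, ∀ z ∈ A, q * x + q * y ≠ z

def IsMaximalLFree (q n : ℕ) (A : Finset ℕ) : Prop :=
  A ⊆ Icc 1 n ∧ LFree q A ∧ ∀ B, B ⊆ Icc 1 n → LFree q B → A ⊆ B → A = B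

instance (q n : ℕ) : Finite {A // IsMaximalLFree q n A} :=
  Set.Finite.to_subtype <|
    (Icc 1 n).powerset.finite_toSet.subset fun _ hA => mem_powerset.2 hA.1

theorem IsMaximalLFree.of_maximal {q n : ℕ} {A : Finset ℕ}
    (hA : Maximal (fun B => B ⊆ Icc 1 n ∧ LFree q B) A) : IsMaximalLFree q n A :=
  ⟨hA.prop.1, hA.prop.2, fun _ hB hBfree hAB => hA.eq_of_le ⟨hB, hBfree⟩ hAB⟩

theorem isMaximalLFree_empty_zero (q : ℕ) : IsMaximalLFree q 0 ∅ :=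
  ⟨empty_subset _, by simp [LFree], fun B hB _ _ => (subset_empty.1 hB).symm⟩

namespace LFree

variable {q n : ℕ}

def X (q n : ℕ) : Finset ℕ := (Ioo (n / (2 * q)) (n / q)).erase (2 * q)

theorem mem_X (hq : 0 < q) {x : ℕ} :
    x ∈ X q n ↔ n < 2 * q * x ∧ q * x + q ≤ n ∧ x ≠ 2 * q := by
  rw [X, mem_erase, mem_Ioo, Nat.div_lt_iff_lt_mul (by omega), ← Nat.add_one_le_iff (n := x),
    Nat.le_div_iff_mul_le hq]
  constructor
  · rintro ⟨hx, h₁, h₂⟩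
    exact ⟨by linarith, by linarith, hx⟩
  · rintro ⟨h₁, h₂, hx⟩
    exact ⟨hx, by linarith, by linarith⟩

theorem le_two_mul_mul_card_X (hq : 0 < q) : n ≤ 2 * q * (#(X q n) + 3) := by
  have hcard : #(Ioo (n / (2 * q)) (n / q)) - 1 ≤ #(X q n) := pred_card_le_card_erase
  rw [Nat.card_Ioo] at hcard
  have hm : n / q + 1 ≤ #(X q n) + 3 + n / (2 * q) := by omega
  have hn_lt : n < q * (n / q + 1) := Nat.lt_mul_div_succ n hq
  have ha : 2 * q * (n / (2 * q)) ≤ n := Nat.mul_div_le n (2 * q)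
  nlinarith

def seed (q n : ℕ) (T : Finset ℕ) : Finset ℕ :=
  insert 1 (T ∪ (X q n \ T).image fun x => q * x + q)

theorem mem_seed {T : Finset ℕ} {u : ℕ} :
    u ∈ seed q n T ↔ u = 1 ∨ u ∈ T ∨ ∃ x ∈ X q n, x ∉ T ∧ q * x + q = u := by
  simp [seed, and_assoc]

variable {T : Finset ℕ}

theorem seed_subset_Icc (hq : 0 < q) (hn : 1 ≤ n) (hT : T ⊆ X q n) : seed q n T ⊆ Icc 1 n := by
  intro u hu
  rw [mem_Icc]
  rcases mem_seed.1 hu with rfl | huT | ⟨x, hx, -, rfl⟩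
  · exact ⟨le_rfl, hn⟩
  · obtain ⟨h₁, h₂, -⟩ := (mem_X hq).1 (hT huT)
    constructor <;> nlinarith
  · obtain ⟨-, h₂, -⟩ := (mem_X hq).1 hx
    constructor <;> nlinarith

theorem lt_two_mul_mul_of_mem_seed (hq : 0 < q) (hT : T ⊆ X q n) {u : ℕ}
    (hu : u ∈ seed q n T) (hu1 : u ≠ 1) : n < 2 * q * u := by
  rcases mem_seed.1 hu with rfl | huT | ⟨x, hx, -, rfl⟩
  · exact (hu1 rfl).elim
  · exact ((mem_X hq).1 (hT huT)).1
  · have := ((mem_X hq).1 hx).1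
    nlinarith

theorem mul_add_one_notMem_seed (hq : 2 ≤ q) (hT : T ⊆ X q n) {v : ℕ}
    (hv : v ∈ seed q n T) : q * (v + 1) ∉ seed q n T := by
  have hq0 : 0 < q := by omega
  intro hw
  rcases mem_seed.1 hw with hw1 | hwT | ⟨y, hy, hyT, hyv⟩
  · nlinarith
  · obtain ⟨-, hw₂, hw₃⟩ := (mem_X hq0).1 (hT hwT)
    by_cases hv1 : v = 1
    · subst hv1
      exact hw₃ (by ring)
    · have := lt_two_mul_mul_of_mem_seed hq0 hT hv hv1
      nlinarith
  · obtain rfl : y = v := by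
      have : q * (y + 1) = q * (v + 1) := by rw [← hyv]; ring
      exact Nat.succ_injective (Nat.eq_of_mul_eq_mul_left hq0 this)
    obtain ⟨hy₁, hy₂, -⟩ := (mem_X hq0).1 hy
    rcases mem_seed.1 hv with rfl | hyT' | ⟨x, hx, -, rfl⟩
    · nlinarith
    · exact hyT hyT'
    · have := ((mem_X hq0).1 hx).1
      nlinarith

theorem seed_lFree (hq : 2 ≤ q) (hn : 1 ≤ n) (hT : T ⊆ X q n) : LFree q (seed q n T) := by
  have hq0 : 0 < q := by omega
  have key : ∀ v ∈ seed q n T, ∀ w ∈ seed q n T, q * 1 + q * v ≠ w := by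
    rintro v hv w hw rfl
    exact mul_add_one_notMem_seed hq hT hv (by rwa [show q * 1 + q * v = q * (v + 1) by ring] at hw)
  intro u hu v hv w hw huvw
  by_cases hu1 : u = 1
  · exact key v hv w hw (hu1 ▸ huvw)
  by_cases hv1 : v = 1
  · exact key u hu w hw (by rw [← huvw, hv1]; ring)
  have hwn : w ≤ n := (mem_Icc.1 (seed_subset_Icc hq0 hn hT hw)).2
  have := lt_two_mul_mul_of_mem_seed hq0 hT hu hu1
  have := lt_two_mul_mul_of_mem_seed hq0 hT hv hv1
  nlinarith

theorem inter_X_eq_of_seed_subset (hT : T ⊆ X q n) {M : Finset ℕ} (hM : LFree q M)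
    (hseed : seed q n T ⊆ M) : M ∩ X q n = T := by
  refine Subset.antisymm (fun x hx => ?_) (subset_inter (fun x hx => hseed ?_) hT)
  · obtain ⟨hxM, hxX⟩ := mem_inter.1 hx
    by_contra hxT
    exact hM x hxM 1 (hseed (mem_seed.2 (.inl rfl))) (q * x + q)
      (hseed (mem_seed.2 (.inr (.inr ⟨x, hxX, hxT, rfl⟩)))) (by ring)
  · exact mem_seed.2 (.inr (.inl hx))

theorem two_pow_card_X_le (hq : 2 ≤ q) (hn : 1 ≤ n) :
    2 ^ #(X q n) ≤ Nat.card {A // IsMaximalLFree q n A} := by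
  classical
  refine two_pow_card_le_natCard_of_forall_inter_eq _ fun T hT => ?_
  obtain ⟨M, hseedM, hM⟩ :=
    exists_le_maximal_subset (seed_subset_Icc (by omega) hn hT) (seed_lFree hq hn hT)
  exact ⟨M, .of_maximal hM, inter_X_eq_of_seed_subset hT hM.prop.2 hseedM⟩

end LFree

/-- For the equation `qx + qy = z` with `q ≥ 2`, the number of maximal solution-free
subsets of `[n]` is at least `2^((n - 6q)/(2q))`. -/
theorem stmt16 (q : ℕ) (hq : 2 ≤ q) (n : ℕ) :
    (2 : ℝ) ^ (((n : ℝ) - 6 * q) / (2 * q)) ≤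
      (Nat.card {A : Finset ℕ // A ⊆ Finset.Icc 1 n ∧
        (∀ x ∈ A, ∀ y ∈ A, ∀ z ∈ A, q * x + q * y ≠ z) ∧
        ∀ B : Finset ℕ, B ⊆ Finset.Icc 1 n →
          (∀ x ∈ B, ∀ y ∈ B, ∀ z ∈ B, q * x + q * y ≠ z) → A ⊆ B → A = B} : ℝ) := by
  change _ ≤ (Nat.card {A // IsMaximalLFree q n A} : ℝ)
  have hq0 : (0 : ℝ) < 2 * q := by positivity
  rcases Nat.eq_zero_or_pos n with rfl | hn
  · have : Nonempty {A // IsMaximalLFree q 0 A} := ⟨⟨∅, isMaximalLFree_empty_zero q⟩⟩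
    calc (2 : ℝ) ^ (((0 : ℕ) - 6 * q : ℝ) / (2 * q)) ≤ 1 :=
          Real.rpow_le_one_of_one_le_of_nonpos one_le_two (div_nonpos_of_nonpos_of_nonneg
            (by simp) hq0.le)
      _ ≤ _ := by exact_mod_cast Nat.card_pos
  have hexp : ((n : ℝ) - 6 * q) / (2 * q) ≤ #(LFree.X q n) := by
    rw [div_le_iff₀ hq0]
    have : (n : ℝ) ≤ 2 * q * (#(LFree.X q n) + 3) := by
      exact_mod_cast LFree.le_two_mul_mul_card_X (by omega)
    linarith
  calc (2 : ℝ) ^ (((n : ℝ) - 6 * q) / (2 * q)) ≤ 2 ^ (#(LFree.X q n) : ℝ) :=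
        Real.rpow_le_rpow_of_exponent_le one_le_two hexp
    _ = 2 ^ #(LFree.X q n) := Real.rpow_natCast 2 _
    _ ≤ _ := by exact_mod_cast LFree.two_pow_card_X_le hq hn
end
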